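/- arXiv:1809.07754 — 2 statements merged into one kernel-verified Lean document; each statement's English description precedes it below -/
import Mathlib

section
/- The Laplace mechanism satisfies ε-differential privacy: given a query f : D → ℝ with L1 sensitivity Δ(f), the mechanism that outputs f(D) + Z, where Z is drawn from the Laplace distribution with density (ε/(2Δ)) · exp(-ε|z|/Δ), satisfies ε-differential privacy. -/
/-!
The output distribution of the mechanism on `D` is the Laplace distribution with location `f D`
and scale `Δ / ε`. By the triangle inequality, moving the location by `|f D - f D'| ≤ Δ` changes
the density pointwise by a factor at most `exp (ε |f D - f D'| / Δ) ≤ exp ε`, and integrating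
this bound over `S` gives the privacy inequality.
-/

open MeasureTheory Real
open scoped ENNReal

noncomputable def laplacePDF (x₀ b x : ℝ) : ℝ≥0∞ :=
  ENNReal.ofReal ((2 * b)⁻¹ * exp (-|x - x₀| / b))

@[fun_prop]
lemma measurable_laplacePDF (x₀ b : ℝ) : Measurable (laplacePDF x₀ b) := by
  unfold laplacePDF; fun_prop

lemma laplacePDF_le_exp_mul {b : ℝ} (hb : 0 ≤ b) (x₀ x₁ x : ℝ) :
    laplacePDF x₀ b x ≤ ENNReal.ofReal (exp (|x₀ - x₁| / b)) * laplacePDF x₁ b x := by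
  have hloss : -|x - x₀| / b ≤ |x₀ - x₁| / b + -|x - x₁| / b := by
    rw [← add_div]
    gcongr
    linarith [abs_sub_le x x₀ x₁, abs_sub_comm x₀ x₁]
  rw [laplacePDF, laplacePDF, ← ENNReal.ofReal_mul (exp_pos _).le]
  apply ENNReal.ofReal_le_ofReal
  calc (2 * b)⁻¹ * exp (-|x - x₀| / b)
      ≤ (2 * b)⁻¹ * exp (|x₀ - x₁| / b + -|x - x₁| / b) := by gcongr
    _ = exp (|x₀ - x₁| / b) * ((2 * b)⁻¹ * exp (-|x - x₁| / b)) := by rw [exp_add]; ring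

lemma map_const_add_withDensity {G : Type*} [MeasurableSpace G] [AddGroup G] [MeasurableAdd G]
    (μ : Measure G) [μ.IsAddLeftInvariant] (p : G → ℝ≥0∞) (c : G) :
    (μ.withDensity p).map (c + ·) = μ.withDensity fun x => p (-c + x) := by
  ext s hs
  rw [Measure.map_apply (measurable_const_add c) hs, withDensity_apply _ (measurable_const_add c hs),
    withDensity_apply _ hs]
  simpa only [neg_add_cancel_left] using
    (measurePreserving_add_left μ c).setLIntegral_comp_preimage_emb
      (MeasurableEquiv.addLeft c).measurableEmbedding (fun x => p (-c + x)) s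

lemma withDensity_le_smul_withDensity {α : Type*} [MeasurableSpace α] (μ : Measure α)
    {p q : α → ℝ≥0∞} (hq : Measurable q) {K : ℝ≥0∞} (hpq : ∀ x, p x ≤ K * q x) :
    μ.withDensity p ≤ K • μ.withDensity q := by
  rw [← withDensity_smul K hq]
  exact withDensity_mono (ae_of_all _ hpq)

lemma ofReal_laplace_density_eq_laplacePDF (ε Δ : ℝ) :
    (fun z => ENNReal.ofReal (ε / (2 * Δ) * exp (-(ε * |z|) / Δ))) = laplacePDF 0 (Δ / ε) := by
  ext z
  rw [laplacePDF, sub_zero]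
  rcases eq_or_ne ε 0 with rfl | hε
  -- both sides vanish, the scale `Δ / 0` being `0`
  · simp
  · congr 2 <;> field_simp

/-- The Laplace mechanism satisfies ε-differential privacy: given a query
`f : D → ℝ` with L1 sensitivity `Δ`, the mechanism outputting `f(D) + Z` with `Z` drawn
from the Laplace distribution with density `(ε/(2Δ)) exp(-ε|z|/Δ)` satisfies ε-DP. -/
theorem laplace_mechanism_dp {Dset : Type*} (Neighbor : Dset → Dset → Prop)
    (f : Dset → ℝ) (Δ ε : ℝ) (hΔ : 0 < Δ) (hε : 0 < ε)
    (hsens : ∀ D D', Neighbor D D' → |f D - f D'| ≤ Δ)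
    (lap : Measure ℝ)
    (hlap : lap = volume.withDensity fun z =>
      ENNReal.ofReal (ε / (2 * Δ) * Real.exp (-(ε * |z|) / Δ)))
    (M : Dset → Measure ℝ) (hM : ∀ D, M D = lap.map (fun z => f D + z)) :
    ∀ D D', Neighbor D D' → ∀ S : Set ℝ, MeasurableSet S →
      M D S ≤ ENNReal.ofReal (Real.exp ε) * M D' S := by
  intro D D' hN S _
  have hM_eq : ∀ D, M D = volume.withDensity (laplacePDF (f D) (Δ / ε)) := fun D => by
    rw [hM, hlap, ofReal_laplace_density_eq_laplacePDF, map_const_add_withDensity]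
    congr with x
    simp only [laplacePDF, neg_add_eq_sub, sub_zero]
  have hloss : |f D - f D'| / (Δ / ε) ≤ ε := by
    rw [div_div_eq_mul_div, div_le_iff₀ hΔ, mul_comm]
    exact mul_le_mul_of_nonneg_left (hsens D D' hN) hε.le
  calc M D S
      ≤ (ENNReal.ofReal (exp (|f D - f D'| / (Δ / ε))) • M D') S := by
        rw [hM_eq, hM_eq]
        exact withDensity_le_smul_withDensity _ (measurable_laplacePDF _ _)
          (laplacePDF_le_exp_mul (by positivity) _ _) S
    _ ≤ ENNReal.ofReal (exp ε) * M D' S := by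
        rw [Measure.smul_apply, smul_eq_mul]
        gcongr
end

section
/- For Z ∼ Laplace(0, b) with b > 0 and true count c ≥ 0, the bias of the truncated mechanism equals E[max(c + Z, 0)] − c = (b/2) · exp(−c/b). In particular the bias tends to 0 as c → ∞ and equals b/2 when c = 0. -/
/-!
Since `max x 0 - x = max (-x) 0` and the Laplace noise `Z` has mean zero, the bias is
`E[max (-(c + Z)) 0]`; by the symmetry of `Z` this equals `E[max (Z - c) 0]`. For `c ≥ 0` the
density on `(c, ∞)` is `exp (-z / b) / (2 b)`, and
`∫_c^∞ (z - c) exp (-z / b) dz = b² exp (-c / b)`.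
-/

open MeasureTheory Real Filter Set

theorem integrable_comp_abs {g : ℝ → ℝ} (hg : IntegrableOn g (Ioi 0)) :
    Integrable fun x => g |x| := by
  have hIoi : IntegrableOn (fun x => g |x|) (Ioi 0) :=
    hg.congr_fun (fun x hx => by rw [abs_of_pos hx]) measurableSet_Ioi
  have hIic : IntegrableOn (fun x => g |x|) (Iic 0) := by
    have hneg : MeasurableEmbedding fun x : ℝ => -x := (Homeomorph.neg ℝ).measurableEmbedding
    rw [← Measure.map_neg_eq_self (volume : Measure ℝ), hneg.integrableOn_map_iff]
    simp_rw [Function.comp_def, abs_neg, neg_preimage, neg_Iic, neg_zero]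
    exact Iff.mpr integrableOn_Ici_iff_integrableOn_Ioi hIoi
  rw [← integrableOn_univ, ← Iic_union_Ioi (a := 0)]
  exact hIic.union hIoi

theorem integral_max_add_mul_sub_eq {p : ℝ → ℝ} (hp : Integrable p)
    (hzp : Integrable fun z => z * p z) (hp_one : ∫ z, p z = 1) (hp_mean : ∫ z, z * p z = 0)
    (c : ℝ) : (∫ z, max (c + z) 0 * p z) - c = ∫ z, max (-(c + z)) 0 * p z := by
  have hlin : Integrable fun z => (c + z) * p z :=
    ((hp.const_mul c).add hzp).congr (ae_of_all _ fun z => by simp only [Pi.add_apply]; ring)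
  have hlin_int : ∫ z, (c + z) * p z = c := by
    simp only [add_mul]
    rw [integral_add (hp.const_mul c) hzp, integral_const_mul, hp_one, hp_mean]
    ring
  have hmax : Integrable fun z => max (c + z) 0 * p z := by
    refine hlin.mono ((by fun_prop : Continuous fun z => max (c + z) 0).aestronglyMeasurable.mul
      hp.aestronglyMeasurable) (ae_of_all _ fun z => ?_)
    simp only [norm_mul, Real.norm_eq_abs, abs_of_nonneg (le_max_right (c + z) 0)]
    gcongr
    exact max_le (le_abs_self _) (abs_nonneg _)
  have hneg_part : (fun z => max (-(c + z)) 0 * p z) =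
      fun z => max (c + z) 0 * p z - (c + z) * p z := by
    funext z
    rw [← sub_mul]
    congr 1
    linarith [max_zero_sub_max_neg_zero_eq_self (c + z)]
  rw [hneg_part, integral_sub hmax hlin, hlin_int]

section ExpTail

variable {b : ℝ}

theorem hasDerivAt_neg_mul_add_mul_exp_neg_div (hb : b ≠ 0) (a x : ℝ) :
    HasDerivAt (fun z => -b * (z - a + b) * exp (-z / b)) ((x - a) * exp (-x / b)) x := by
  have hlin : HasDerivAt (fun z => -b * (z - a + b)) (-b) x := by
    simpa using (((hasDerivAt_id x).sub_const a).add_const b).const_mul (-b)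
  have hexp : HasDerivAt (fun z => exp (-z / b)) (exp (-x / b) * (-1 / b)) x :=
    (hasDerivAt_exp _).comp x (by simpa using (hasDerivAt_id x).neg.div_const b)
  exact (hlin.mul hexp).congr_deriv (by field_simp; ring)

theorem tendsto_neg_mul_add_mul_exp_neg_div (hb : 0 < b) (a : ℝ) :
    Tendsto (fun z => -b * (z - a + b) * exp (-z / b)) atTop (nhds 0) := by
  have hu : Tendsto (fun z => z / b) atTop atTop := tendsto_id.atTop_div_const hb
  have hlim : Tendsto (fun u => -b ^ 2 * (u ^ 1 * exp (-u)) - b * (b - a) * exp (-u)) atTop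
      (nhds 0) := by
    simpa using ((tendsto_pow_mul_exp_neg_atTop_nhds_zero 1).const_mul (-b ^ 2)).sub
      (tendsto_exp_neg_atTop_nhds_zero.const_mul (b * (b - a)))
  refine (hlim.comp hu).congr fun z => ?_
  simp only [Function.comp_apply, neg_div]
  field_simp
  ring

theorem integrableOn_sub_mul_exp_neg_div_Ioi (hb : 0 < b) (a : ℝ) :
    IntegrableOn (fun z => (z - a) * exp (-z / b)) (Ioi a) :=
  integrableOn_Ioi_deriv_of_nonneg' (fun x _ => hasDerivAt_neg_mul_add_mul_exp_neg_div hb.ne' a x)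
    (fun _ hx => mul_nonneg (sub_nonneg.2 (le_of_lt hx)) (exp_pos _).le)
    (tendsto_neg_mul_add_mul_exp_neg_div hb a)

theorem integral_sub_mul_exp_neg_div_Ioi (hb : 0 < b) (a : ℝ) :
    ∫ z in Ioi a, (z - a) * exp (-z / b) = b ^ 2 * exp (-a / b) := by
  rw [integral_Ioi_of_hasDerivAt_of_tendsto'
    (fun x _ => hasDerivAt_neg_mul_add_mul_exp_neg_div hb.ne' a x)
    (integrableOn_sub_mul_exp_neg_div_Ioi hb a) (tendsto_neg_mul_add_mul_exp_neg_div hb a)]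
  ring

end ExpTail

noncomputable def laplacePDFReal (b z : ℝ) : ℝ := 1 / (2 * b) * exp (-|z| / b)

section Laplace

variable {b : ℝ}

theorem laplacePDFReal_neg (b z : ℝ) : laplacePDFReal b (-z) = laplacePDFReal b z := by
  rw [laplacePDFReal, laplacePDFReal, abs_neg]

theorem integrableOn_exp_neg_div_Ioi (hb : 0 < b) (a : ℝ) :
    IntegrableOn (fun z => exp (-z / b)) (Ioi a) := by
  simpa only [neg_mul, one_div, inv_mul_eq_div, neg_div] using
    exp_neg_integrableOn_Ioi a (one_div_pos.2 hb)

theorem integrable_laplacePDFReal (hb : 0 < b) : Integrable (laplacePDFReal b) :=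
  (integrable_comp_abs (integrableOn_exp_neg_div_Ioi hb 0)).const_mul _

theorem integrable_mul_laplacePDFReal (hb : 0 < b) :
    Integrable fun z => z * laplacePDFReal b z := by
  have habs : Integrable fun z => |z| * laplacePDFReal b z := by
    refine ((integrable_comp_abs (g := fun z => z * exp (-z / b)) ?_).const_mul
      (1 / (2 * b))).congr (ae_of_all _ fun z => ?_)
    · exact (integrableOn_sub_mul_exp_neg_div_Ioi hb 0).congr_fun (fun z _ => by simp)
        measurableSet_Ioi
    · simp only [laplacePDFReal]
      ring
  refine habs.mono (continuous_id.aestronglyMeasurable.mul (integrable_laplacePDFReal hb).1)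
    (ae_of_all _ fun z => ?_)
  simp

theorem integral_laplacePDFReal (hb : 0 < b) : ∫ z, laplacePDFReal b z = 1 := by
  have hIoi : ∫ z in Ioi 0, exp (-z / b) = b := by
    have := integral_exp_mul_Ioi (neg_lt_zero.2 (one_div_pos.2 hb)) 0
    simp only [mul_zero, exp_zero, neg_mul, one_div_mul_eq_div, neg_div] at this ⊢
    rw [this]
    field_simp
  simp only [laplacePDFReal]
  rw [integral_const_mul, integral_comp_abs (f := fun z => exp (-z / b)), hIoi]
  field_simp

theorem integral_mul_laplacePDFReal (b : ℝ) : ∫ z, z * laplacePDFReal b z = 0 := by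
  have hodd := integral_neg_eq_self (fun z => z * laplacePDFReal b z) volume
  simp only [laplacePDFReal_neg, neg_mul, integral_neg] at hodd
  linarith

theorem integral_max_sub_mul_laplacePDFReal (hb : 0 < b) {c : ℝ} (hc : 0 ≤ c) :
    ∫ z, max (z - c) 0 * laplacePDFReal b z = b / 2 * exp (-c / b) := by
  have hind : (fun z => max (z - c) 0 * laplacePDFReal b z) =
      (Ioi c).indicator fun z => 1 / (2 * b) * ((z - c) * exp (-z / b)) := by
    funext z
    by_cases hz : c < z
    · simp only [indicator_of_mem (mem_Ioi.2 hz), laplacePDFReal,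
        max_eq_left (sub_nonneg.2 hz.le), abs_of_pos (hc.trans_lt hz)]
      ring
    · simp only [indicator_of_notMem (notMem_Ioi.2 (not_lt.1 hz)), max_eq_right
        (sub_nonpos.2 (not_lt.1 hz)), zero_mul]
  rw [hind, integral_indicator measurableSet_Ioi, integral_const_mul,
    integral_sub_mul_exp_neg_div_Ioi hb]
  field_simp

theorem integral_max_add_mul_laplacePDFReal (hb : 0 < b) {c : ℝ} (hc : 0 ≤ c) :
    ∫ z, max (c + z) 0 * laplacePDFReal b z = c + b / 2 * exp (-c / b) := by
  have hsymm : ∫ z, max (-(c + z)) 0 * laplacePDFReal b z =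
      ∫ z, max (z - c) 0 * laplacePDFReal b z := by
    rw [← integral_neg_eq_self]
    simp only [laplacePDFReal_neg, neg_add', sub_neg_eq_add, neg_add_eq_sub]
  have hbias := integral_max_add_mul_sub_eq (integrable_laplacePDFReal hb)
    (integrable_mul_laplacePDFReal hb) (integral_laplacePDFReal hb)
    (integral_mul_laplacePDFReal b) c
  rw [hsymm, integral_max_sub_mul_laplacePDFReal hb hc] at hbias
  linarith

end Laplace

/-- For `Z ~ Laplace(0, b)` with `b > 0` and true count `c ≥ 0`, the bias of
the truncated mechanism equals `E[max(c + Z, 0)] - c = (b/2) exp(-c/b)`. In particular the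
bias tends to 0 as `c → ∞` and equals `b/2` at `c = 0`. -/
theorem truncated_laplace_bias_formula (b : ℝ) (hb : 0 < b)
    (bias : ℝ → ℝ)
    (hbias : ∀ c : ℝ, bias c =
      (∫ z : ℝ, max (c + z) 0 * (1 / (2 * b) * Real.exp (-|z| / b))) - c) :
    (∀ c : ℝ, 0 ≤ c → bias c = b / 2 * Real.exp (-c / b)) ∧
      Tendsto bias atTop (nhds 0) ∧
      bias 0 = b / 2 := by
  have hform (c : ℝ) (hc : 0 ≤ c) : bias c = b / 2 * exp (-c / b) :=
    (hbias c).trans (sub_eq_of_eq_add' (integral_max_add_mul_laplacePDFReal hb hc))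
  have hlim : Tendsto (fun c => b / 2 * exp (-c / b)) atTop (nhds 0) := by
    simpa [neg_div] using
      (tendsto_exp_neg_atTop_nhds_zero.comp (tendsto_id.atTop_div_const hb)).const_mul (b / 2)
  refine ⟨hform, hlim.congr' ?_, by simpa using hform 0 le_rfl⟩
  filter_upwards [eventually_ge_atTop 0] with c hc
  exact (hform c hc).symm
end
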